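/- Let X be a complex Banach space, 1 ≤ p < ∞, A a closed linear operator on X with domain D(A), B a bounded linear operator on X, r_1,…,r_n real numbers, and f ∈ L^p(𝕋;X). Suppose x : ℝ → X is a 2π-periodic function, continuous on [0,2π], such that ∫₀^t x(s) ds ∈ D(A) for all t ∈ [0,2π] and x(t) = x(0) + A∫₀^t x(s) ds + ∫₀^t ( Σ_{j=1}^n B x(s − r_j) + f(s) ) ds for all t ∈ [0,2π] (in particular x(2π) = x(0)). Then for every k ∈ ℤ the Fourier coefficient x̂(k) belongs to D(A) and (ikI − A − Σ_{j=1}^n e^{−ikr_j} B) x̂(k) = f̂(k). -/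

import Mathlib

/-!
Pair the integrated equation with `e_k(t) = e^{-ikt}`. For integrable `g` with primitive
`G(t) = ∫₀ᵗ g`, Fubini on the triangle `0 < s ≤ t ≤ 2π` gives `ik Ĝ(k) = ĝ(k) - (2π)⁻¹ G(2π)`.
For `g = x` this writes `x̂(k) = (2π)⁻¹ X(2π) + ik X̂(k)` with `X(t) = ∫₀ᵗ x`. Both terms lie in
`D(A)`: the first by hypothesis, the second because the graph of a closed operator is a closed
subspace and so contains the Bochner integral of any integrable graph-valued function (Hille).
Applying `A` and using the equation (at `t = 2π`, where `x(2π) = x(0)`, and under the integral)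
gives `ik x̂(k) - A x̂(k) = ĝ(k)` for the whole forcing term `g = Σ_j B x(· - r_j) + f`.
Translating a `2π`-periodic function by `r` multiplies its `k`-th coefficient by `e^{-ikr}`,
which turns the delay terms into `e^{-ikr_j} B x̂(k)`.
-/

open MeasureTheory Real Complex Filter Finset intervalIntegral
open scoped ENNReal NNReal

noncomputable section

/-- `f` represents an element of `L^p(𝕋; X)`: it is `2π`-periodic and
`p`-integrable over one period `(0, 2π]`. -/
def PeriodicLp {X : Type*} [NormedAddCommGroup X] (p : ℝ≥0∞) (f : ℝ → X) : Prop :=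
  Function.Periodic f (2 * Real.pi) ∧
    MeasureTheory.MemLp f p (MeasureTheory.volume.restrict (Set.Ioc 0 (2 * Real.pi)))

/-- The `k`-th Fourier coefficient `f̂(k) = (1/(2π)) ∫₀^{2π} e^{-iks} f(s) ds`. -/
def fourierCoef {X : Type*} [NormedAddCommGroup X] [NormedSpace ℂ X] (f : ℝ → X) (k : ℤ) : X :=
  (1 / (2 * (Real.pi : ℂ))) •
    ∫ s in (0:ℝ)..(2 * Real.pi), Complex.exp (-Complex.I * (k : ℂ) * (s : ℂ)) • f s

/-- A family `T ⊆ B(X, Y)` of bounded operators is `R`-bounded: there are `C > 0` and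
`q ∈ [1, ∞)` such that for all `m`, all `T₁, …, T_m ∈ T` and `x₁, …, x_m ∈ X`,
`(2^{-m} Σ_{ε ∈ {-1,1}^m} ‖Σ_j ε_j T_j x_j‖^q)^{1/q} ≤
 C (2^{-m} Σ_{ε ∈ {-1,1}^m} ‖Σ_j ε_j x_j‖^q)^{1/q}`, where signs `ε ∈ {-1,1}^m` are
encoded by maps `Fin m → Bool`. -/
def RBounded {X Y : Type*} [NormedAddCommGroup X] [NormedSpace ℂ X]
    [NormedAddCommGroup Y] [NormedSpace ℂ Y] (T : Set (X →L[ℂ] Y)) : Prop :=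
  ∃ C q : ℝ, 0 < C ∧ 1 ≤ q ∧
    ∀ (m : ℕ) (Ts : Fin m → (X →L[ℂ] Y)) (x : Fin m → X), (∀ j, Ts j ∈ T) →
      (((2:ℝ)⁻¹) ^ m * ∑ ε : Fin m → Bool,
          ‖∑ j, (if ε j then (1:ℝ) else -1) • Ts j (x j)‖ ^ q) ^ (1/q) ≤
      C * ((((2:ℝ)⁻¹) ^ m * ∑ ε : Fin m → Bool,
          ‖∑ j, (if ε j then (1:ℝ) else -1) • x j‖ ^ q) ^ (1/q))

/-- `{M_k}_{k ∈ ℤ}` is an `L^p`-multiplier: for each `f ∈ L^p(𝕋; X)` there is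
`u ∈ L^p(𝕋; Y)` with `û(k) = M_k f̂(k)` for all `k`. -/
def IsLpMultiplier {X Y : Type*} [NormedAddCommGroup X] [NormedSpace ℂ X]
    [NormedAddCommGroup Y] [NormedSpace ℂ Y] (p : ℝ≥0∞) (M : ℤ → (X →L[ℂ] Y)) : Prop :=
  ∀ f : ℝ → X, PeriodicLp p f →
    ∃ u : ℝ → Y, PeriodicLp p u ∧ ∀ k : ℤ, fourierCoef u k = M k (fourierCoef f k)

/-- `u` represents an element of `H^{1,p}(𝕋; X)`: `u ∈ L^p(𝕋; X)` and there is
`v ∈ L^p(𝕋; X)` with `v̂(k) = ik û(k)` for all `k`. -/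
def MemH1p {X : Type*} [NormedAddCommGroup X] [NormedSpace ℂ X] (p : ℝ≥0∞) (u : ℝ → X) : Prop :=
  PeriodicLp p u ∧ ∃ v : ℝ → X, PeriodicLp p v ∧
    ∀ k : ℤ, fourierCoef v k = (Complex.I * (k : ℂ)) • fourierCoef u k

/-- The (possibly unbounded) linear operator `A` with domain `D` is closed. -/
def IsClosedOp {X : Type*} [NormedAddCommGroup X] [NormedSpace ℂ X]
    (D : Submodule ℂ X) (A : D →ₗ[ℂ] X) : Prop :=
  ∀ (x : ℕ → D) (a b : X),
    Filter.Tendsto (fun m => (x m : X)) Filter.atTop (nhds a) →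
    Filter.Tendsto (fun m => A (x m)) Filter.atTop (nhds b) →
    ∃ ha : a ∈ D, A ⟨a, ha⟩ = b

/-- `x` is a `2π`-periodic strong `L^p`-solution of
`x′(t) = A x(t) + Σ_{j=1}^n B x(t - r_j) + f(t)`, `x(0) = x(2π)`: it belongs to
`H^{1,p}(𝕋; X)` (with `v` playing the role of `x′`), `x(t) ∈ D(A)` a.e. and the
equation holds almost everywhere on a period. -/
def IsStrongSolution {X : Type*} [NormedAddCommGroup X] [NormedSpace ℂ X]
    (p : ℝ≥0∞) (D : Submodule ℂ X) (A : D →ₗ[ℂ] X) (B : X →L[ℂ] X)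
    {n : ℕ} (r : Fin n → ℝ) (f : ℝ → X) (x : ℝ → X) : Prop :=
  PeriodicLp p x ∧
  ∃ v : ℝ → X, PeriodicLp p v ∧
    (∀ k : ℤ, fourierCoef v k = (Complex.I * (k : ℂ)) • fourierCoef x k) ∧
    ∀ᵐ t ∂(MeasureTheory.volume.restrict (Set.Ioc 0 (2 * Real.pi))),
      ∃ hx : x t ∈ D, v t = A ⟨x t, hx⟩ + (∑ j, B (x (t - r j))) + f t

theorem Submodule.integral_mem_of_ae_mem {α E : Type*} [MeasurableSpace α] {μ : Measure α}
    [NormedAddCommGroup E] [NormedSpace ℝ E] [CompleteSpace E] {S : Submodule ℝ E}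
    (hS : IsClosed (S : Set E)) {F : α → E} (hF : Integrable F μ) (h : ∀ᵐ t ∂μ, F t ∈ S) :
    ∫ t, F t ∂μ ∈ S := by
  -- `E ⧸ S` is a normed space since `S` is closed; the quotient map kills `F` a.e.
  have : IsClosed (S : Set E) := hS
  rw [← Submodule.Quotient.mk_eq_zero]
  change S.mkQL _ = 0
  rw [← S.mkQL.integral_comp_comm hF]
  refine (integral_congr_ae (h.mono fun t ht => ?_)).trans (integral_zero α _)
  simpa using ht

theorem IsClosedOp.isClosed {X : Type*} [NormedAddCommGroup X] [NormedSpace ℂ X]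
    {D : Submodule ℂ X} {A : D →ₗ[ℂ] X} (hA : IsClosedOp D A) : (LinearPMap.mk D A).IsClosed := by
  refine IsSeqClosed.isClosed fun u l hu hl => ?_
  choose d hd using fun m => (LinearPMap.mem_graph_iff _).1 (hu m)
  obtain ⟨hl₁, hAl⟩ := hA d l.1 l.2 (by simpa [(hd _).1] using hl.fst_nhds)
    (by convert hl.snd_nhds using 2 with m; exact (hd m).2)
  exact (LinearPMap.mem_graph_iff _).2 ⟨⟨l.1, hl₁⟩, rfl, hAl⟩

theorem LinearPMap.IsClosed.integral_mem_graph {E F : Type*} [NormedAddCommGroup E]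
    [NormedSpace ℂ E] [CompleteSpace E] [NormedAddCommGroup F] [NormedSpace ℂ F] [CompleteSpace F]
    {T : E →ₗ.[ℂ] F} (hT : T.IsClosed) {α : Type*} [MeasurableSpace α] {μ : Measure α}
    {φ : α → E} {ψ : α → F} (hφ : Integrable φ μ) (hψ : Integrable ψ μ)
    (h : ∀ᵐ t ∂μ, (φ t, ψ t) ∈ T.graph) :
    (∫ t, φ t ∂μ, ∫ t, ψ t ∂μ) ∈ T.graph := by
  rw [← integral_pair hφ hψ]
  exact Submodule.integral_mem_of_ae_mem (S := T.graph.restrictScalars ℝ) hT (hφ.prodMk hψ) h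

section IntegrationByParts

variable {E : Type*} [NormedAddCommGroup E] [NormedSpace ℂ E] [CompleteSpace E]

theorem intervalIntegral.integral_smul_primitive {v : ℝ → ℂ} {g : ℝ → E} {a b : ℝ}
    (hab : a ≤ b) (hv : IntervalIntegrable v volume a b) (hg : IntervalIntegrable g volume a b) :
    ∫ t in a..b, v t • ∫ s in a..t, g s = ∫ s in a..b, (∫ t in s..b, v t) • g s := by
  set μ := volume.restrict (Set.Ioc a b)
  set F : ℝ × ℝ → E := {p | p.2 ≤ p.1}.indicator fun p => v p.1 • g p.2
  have hF : Integrable F (μ.prod μ) :=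
    (hv.1.smul_prod hg.1).indicator (measurableSet_le measurable_snd measurable_fst)
  simp only [intervalIntegral.integral_of_le hab]
  convert integral_integral_swap (f := fun t s => F (t, s)) hF using 1
  · refine setIntegral_congr_fun measurableSet_Ioc fun t ht => ?_
    have : (fun s => F (t, s)) = (Set.Iic t).indicator fun s => v t • g s := rfl
    rw [this, MeasureTheory.integral_indicator measurableSet_Iic,
      Measure.restrict_restrict measurableSet_Iic, Set.Iic_inter_Ioc_of_le ht.2,
      MeasureTheory.integral_smul, intervalIntegral.integral_of_le ht.1.le]
  · refine setIntegral_congr_fun measurableSet_Ioc fun s hs => ?_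
    have : (fun t => F (t, s)) = (Set.Ici s).indicator fun t => v t • g s := rfl
    rw [this, MeasureTheory.integral_indicator measurableSet_Ici,
      Measure.restrict_congr_set Ioi_ae_eq_Ici.symm, Measure.restrict_restrict measurableSet_Ioi,
      Set.inter_comm, Set.Ioc_inter_Ioi, max_eq_right hs.1.le, _root_.integral_smul_const,
      intervalIntegral.integral_of_le hs.2]

theorem intervalIntegral.integral_deriv_smul_primitive {u u' : ℝ → ℂ} {g : ℝ → E} {a b : ℝ}
    (hab : a ≤ b) (hu : ∀ t ∈ Set.uIcc a b, HasDerivAt u (u' t) t)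
    (hu' : IntervalIntegrable u' volume a b) (hg : IntervalIntegrable g volume a b) :
    ∫ t in a..b, u' t • ∫ s in a..t, g s = u b • (∫ s in a..b, g s) - ∫ s in a..b, u s • g s := by
  have hftc : ∀ s ∈ Set.uIcc a b, ∫ t in s..b, u' t = u b - u s := fun s hs =>
    integral_eq_sub_of_hasDerivAt (fun t ht => hu t (Set.uIcc_subset_uIcc_right hs ht))
      (hu'.mono_set (Set.uIcc_subset_uIcc_right hs))
  have hcont : ContinuousOn u (Set.uIcc a b) := fun t ht =>
    (hu t ht).continuousAt.continuousWithinAt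
  rw [integral_smul_primitive hab hu' hg,
    integral_congr (g := fun s => u b • g s - u s • g s) fun s hs => by
      simp only [hftc s hs, sub_smul],
    integral_sub (hg.continuousOn_smul continuousOn_const) (hg.continuousOn_smul hcont),
    intervalIntegral.integral_smul]

end IntegrationByParts

theorem Function.Periodic.intervalIntegrable_comp_sub_right {E : Type*} [NormedAddCommGroup E]
    {f : ℝ → E} {T : ℝ} (hf : Function.Periodic f T) (hT : T ≠ 0)
    (hint : IntervalIntegrable f volume 0 T) (c a b : ℝ) : IntervalIntegrable (fun t => f (t - c)) volume a b := by
  simpa using (hf.intervalIntegrable₀ hT hint (a - c) (b - c)).comp_sub_right c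

section FourierCoefficients

variable {E : Type*} [NormedAddCommGroup E] [NormedSpace ℂ E]

theorem hasDerivAt_exp_neg_I_mul (k : ℤ) (t : ℝ) :
    HasDerivAt (fun s : ℝ => Complex.exp (-Complex.I * k * s))
      (-Complex.I * k * Complex.exp (-Complex.I * k * t)) t := by
  simpa [mul_comm] using ((hasDerivAt_id (t : ℂ)).comp_ofReal.const_mul (-Complex.I * k)).cexp

theorem exp_neg_I_mul_two_pi (k : ℤ) :
    Complex.exp (-Complex.I * k * ((2 * π : ℝ) : ℂ)) = 1 := by
  rw [← Complex.exp_int_mul_two_pi_mul_I (-k)]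
  push_cast
  ring_nf

theorem exp_neg_I_mul_add_two_pi (k : ℤ) (t : ℝ) :
    Complex.exp (-Complex.I * k * ((t + 2 * π : ℝ) : ℂ)) = Complex.exp (-Complex.I * k * t) := by
  rw [Complex.ofReal_add, mul_add, Complex.exp_add, exp_neg_I_mul_two_pi, mul_one]

theorem IntervalIntegrable.exp_neg_I_mul_smul {f : ℝ → E} {a b : ℝ}
    (hf : IntervalIntegrable f volume a b) (k : ℤ) :
    IntervalIntegrable (fun s => Complex.exp (-Complex.I * k * s) • f s) volume a b :=
  hf.continuousOn_smul (by fun_prop)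

theorem fourierCoef_add {f g : ℝ → E} (hf : IntervalIntegrable f volume 0 (2 * π))
    (hg : IntervalIntegrable g volume 0 (2 * π)) (k : ℤ) :
    fourierCoef (fun s => f s + g s) k = fourierCoef f k + fourierCoef g k := by
  simp only [fourierCoef, smul_add]
  rw [integral_add (hf.exp_neg_I_mul_smul k) (hg.exp_neg_I_mul_smul k), smul_add]

theorem fourierCoef_sub {f g : ℝ → E} (hf : IntervalIntegrable f volume 0 (2 * π))
    (hg : IntervalIntegrable g volume 0 (2 * π)) (k : ℤ) :
    fourierCoef (fun s => f s - g s) k = fourierCoef f k - fourierCoef g k := by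
  simp only [fourierCoef, smul_sub]
  rw [integral_sub (hf.exp_neg_I_mul_smul k) (hg.exp_neg_I_mul_smul k), smul_sub]

theorem fourierCoef_sum {ι : Type*} (s : Finset ι) {f : ι → ℝ → E}
    (hf : ∀ i ∈ s, IntervalIntegrable (f i) volume 0 (2 * π)) (k : ℤ) :
    fourierCoef (fun t => ∑ i ∈ s, f i t) k = ∑ i ∈ s, fourierCoef (f i) k := by
  simp only [fourierCoef, Finset.smul_sum]
  rw [intervalIntegral.integral_finsetSum fun i hi => (hf i hi).exp_neg_I_mul_smul k,
    Finset.smul_sum]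

theorem ContinuousLinearMap.fourierCoef_comp {F : Type*} [NormedAddCommGroup F] [NormedSpace ℂ F]
    [CompleteSpace E] [CompleteSpace F] (L : E →L[ℂ] F) {f : ℝ → E}
    (hf : IntervalIntegrable f volume 0 (2 * π)) (k : ℤ) :
    fourierCoef (fun t => L (f t)) k = L (fourierCoef f k) := by
  simp only [fourierCoef, ← L.map_smul]
  rw [L.intervalIntegral_comp_comm (hf.exp_neg_I_mul_smul k), L.map_smul]

theorem Function.Periodic.fourierCoef_comp_sub_right {f : ℝ → E}
    (hf : Function.Periodic f (2 * π)) (c : ℝ) (k : ℤ) :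
    fourierCoef (fun t => f (t - c)) k = Complex.exp (-Complex.I * k * c) • fourierCoef f k := by
  set F : ℝ → E := fun t => Complex.exp (-Complex.I * k * t) • f t
  have hF : Function.Periodic F (2 * π) := fun t => by
    simp only [F, exp_neg_I_mul_add_two_pi, hf t]
  have hshift (t : ℝ) : Complex.exp (-Complex.I * k * t) • f (t - c)
      = Complex.exp (-Complex.I * k * c) • F (t - c) := by
    simp only [F, smul_smul, ← Complex.exp_add]
    push_cast
    ring_nf
  rw [fourierCoef, fourierCoef, intervalIntegral.integral_congr fun t _ => hshift t,
    intervalIntegral.integral_smul, intervalIntegral.integral_comp_sub_right F, smul_comm]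
  congr 2
  rw [zero_sub, sub_eq_neg_add, hF.intervalIntegral_add_eq (-c) 0, zero_add]

theorem Function.Periodic.fourierCoef_sum_delay [CompleteSpace E] {x : ℝ → E}
    (hx : Function.Periodic x (2 * π)) (hint : IntervalIntegrable x volume 0 (2 * π))
    (B : E →L[ℂ] E) {ι : Type*} (s : Finset ι) (r : ι → ℝ) (k : ℤ) :
    fourierCoef (fun t => ∑ j ∈ s, B (x (t - r j))) k
      = ∑ j ∈ s, Complex.exp (-Complex.I * k * r j) • B (fourierCoef x k) := by
  have hdelay (c : ℝ) := hx.intervalIntegrable_comp_sub_right two_pi_pos.ne' hint c 0 (2 * π)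
  simp only [fourierCoef_sum s fun j _ => ⟨B.integrable_comp (hdelay (r j)).1,
      B.integrable_comp (hdelay (r j)).2⟩, B.fourierCoef_comp (hdelay _),
    hx.fourierCoef_comp_sub_right, B.map_smul]

theorem smul_fourierCoef_const [CompleteSpace E] (v : E) (k : ℤ) :
    (Complex.I * k) • fourierCoef (fun _ => v) k = 0 := by
  have hftc := integral_eq_sub_of_hasDerivAt (fun t _ => hasDerivAt_exp_neg_I_mul k t)
    ((by fun_prop : Continuous fun t : ℝ => -Complex.I * k * Complex.exp (-Complex.I * k * t)
      ).intervalIntegrable 0 (2 * π))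
  have hmean : Complex.I * k * ∫ t in 0..2 * π, Complex.exp (-Complex.I * k * t) = 0 := by
    rw [← neg_eq_zero, ← neg_mul, ← neg_mul, ← intervalIntegral.integral_const_mul, hftc,
      exp_neg_I_mul_two_pi]
    simp
  rw [fourierCoef, intervalIntegral.integral_smul_const, smul_smul, smul_smul, mul_right_comm,
    hmean, zero_mul, zero_smul]

theorem smul_fourierCoef_primitive [CompleteSpace E] {g : ℝ → E}
    (hg : IntervalIntegrable g volume 0 (2 * π)) (k : ℤ) :
    (Complex.I * k) • fourierCoef (fun t => ∫ s in 0..t, g s) k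
      = fourierCoef g k - (1 / (2 * (π : ℂ))) • ∫ s in 0..2 * π, g s := by
  have hparts := intervalIntegral.integral_deriv_smul_primitive two_pi_pos.le
    (fun t _ => hasDerivAt_exp_neg_I_mul k t)
    ((by fun_prop : Continuous fun t : ℝ => -Complex.I * k * Complex.exp (-Complex.I * k * t)
      ).intervalIntegrable 0 (2 * π)) hg
  have hsmul (t : ℝ) : (-Complex.I * k * Complex.exp (-Complex.I * k * t)) • ∫ s in 0..t, g s
      = -((Complex.I * k) • Complex.exp (-Complex.I * k * t) • ∫ s in 0..t, g s) := by
    rw [mul_smul, neg_mul, neg_smul]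
  rw [intervalIntegral.integral_congr fun t _ => hsmul t, intervalIntegral.integral_neg,
    intervalIntegral.integral_smul, exp_neg_I_mul_two_pi, one_smul] at hparts
  rw [fourierCoef, fourierCoef, smul_comm, ← smul_sub, ← neg_sub, ← hparts, neg_neg]

end FourierCoefficients

theorem LinearPMap.IsClosed.fourierCoef_mem_graph {E F : Type*} [NormedAddCommGroup E]
    [NormedSpace ℂ E] [CompleteSpace E] [NormedAddCommGroup F] [NormedSpace ℂ F] [CompleteSpace F]
    {T : E →ₗ.[ℂ] F} (hT : T.IsClosed) {φ : ℝ → E} {ψ : ℝ → F}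
    (hφ : IntervalIntegrable φ volume 0 (2 * π)) (hψ : IntervalIntegrable ψ volume 0 (2 * π))
    (h : ∀ t ∈ Set.Ioc 0 (2 * π), (φ t, ψ t) ∈ T.graph) (k : ℤ) :
    (fourierCoef φ k, fourierCoef ψ k) ∈ T.graph := by
  have hint := hT.integral_mem_graph (hφ.exp_neg_I_mul_smul k).1 (hψ.exp_neg_I_mul_smul k).1
    ((ae_restrict_mem measurableSet_Ioc).mono fun t ht => T.graph.smul_mem _ (h t ht))
  simp only [← intervalIntegral.integral_of_le two_pi_pos.le] at hint
  exact T.graph.smul_mem _ hint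

section MildSolution

variable {X : Type*} [NormedAddCommGroup X] [NormedSpace ℂ X]

/-- `x(t) = x(0) + T (∫₀ᵗ x) + ∫₀ᵗ g` on `[0, 2π]` and `x(2π) = x(0)`, with the membership
`∫₀ᵗ x ∈ dom T` and the value of `T` packaged as membership in the graph of `T`. -/
def IsPeriodicMildSolution (T : X →ₗ.[ℂ] X) (g x : ℝ → X) : Prop :=
  x (2 * π) = x 0 ∧
    ∀ t ∈ Set.Icc 0 (2 * π), (∫ s in 0..t, x s, x t - x 0 - ∫ s in 0..t, g s) ∈ T.graph

theorem IsPeriodicMildSolution.fourierCoef_mem_graph [CompleteSpace X] {T : X →ₗ.[ℂ] X}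
    (hT : T.IsClosed) {g x : ℝ → X} (hsol : IsPeriodicMildSolution T g x)
    (hx : IntervalIntegrable x volume 0 (2 * π)) (hg : IntervalIntegrable g volume 0 (2 * π))
    (k : ℤ) :
    (fourierCoef x k, (Complex.I * k) • fourierCoef x k - fourierCoef g k) ∈ T.graph := by
  obtain ⟨hperiod, hgraph⟩ := hsol
  have hx₀ : IntervalIntegrable (fun _ => x 0) volume 0 (2 * π) := intervalIntegrable_const
  have hG : IntervalIntegrable (fun t => ∫ s in 0..t, g s) volume 0 (2 * π) :=
    (continuousOn_primitive_interval' hg Set.left_mem_uIcc).intervalIntegrable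
  have hend : (∫ s in 0..2 * π, x s, -∫ s in 0..2 * π, g s) ∈ T.graph := by
    simpa [hperiod] using hgraph (2 * π) ⟨two_pi_pos.le, le_rfl⟩
  have hcoef := hT.fourierCoef_mem_graph
    ((continuousOn_primitive_interval' hx Set.left_mem_uIcc).intervalIntegrable (μ := volume))
    ((hx.sub hx₀).sub hG) (fun t ht => hgraph t (Set.Ioc_subset_Icc_self ht)) k
  rw [fourierCoef_sub (hx.sub hx₀) hG, fourierCoef_sub hx hx₀] at hcoef
  convert T.graph.add_mem (T.graph.smul_mem (1 / (2 * (π : ℂ))) hend)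
    (T.graph.smul_mem (Complex.I * k) hcoef) using 1
  ext
  · simp only [Prod.fst_add, Prod.smul_fst, smul_fourierCoef_primitive hx]
    abel
  · simp only [Prod.snd_add, Prod.smul_snd, smul_sub, smul_neg, smul_fourierCoef_const,
      smul_fourierCoef_primitive hg]
    abel

end MildSolution

theorem mild_solution_fourierCoef_general {X : Type*}
    [NormedAddCommGroup X] [NormedSpace ℂ X] [CompleteSpace X]
    (p : ℝ≥0∞) (hp1 : 1 ≤ p)
    (D : Submodule ℂ X) (A : D →ₗ[ℂ] X) (hA : IsClosedOp D A)
    (B : X →L[ℂ] X) (n : ℕ) (r : Fin n → ℝ)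
    (f : ℝ → X) (hf : PeriodicLp p f)
    (x : ℝ → X) (hxper : Function.Periodic x (2 * Real.pi))
    (hxcont : ContinuousOn x (Set.Icc 0 (2 * Real.pi)))
    (hxmem : ∀ t ∈ Set.Icc (0:ℝ) (2 * Real.pi), (∫ s in (0:ℝ)..t, x s) ∈ D)
    (hxeq : ∀ t : ℝ, ∀ ht : t ∈ Set.Icc (0:ℝ) (2 * Real.pi),
      x t = x 0 + A ⟨∫ s in (0:ℝ)..t, x s, hxmem t ht⟩
        + ∫ s in (0:ℝ)..t, ((∑ j, B (x (s - r j))) + f s))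
    (k : ℤ) :
    ∃ h : fourierCoef x k ∈ D,
      (Complex.I * (k : ℂ)) • fourierCoef x k - A ⟨fourierCoef x k, h⟩
        - ∑ j, Complex.exp (-Complex.I * (k : ℂ) * (r j : ℂ)) • B (fourierCoef x k)
      = fourierCoef f k := by
  have hx : IntervalIntegrable x volume 0 (2 * π) :=
    (hxcont.mono (Set.uIcc_of_le two_pi_pos.le).subset).intervalIntegrable
  have hf' : IntervalIntegrable f volume 0 (2 * π) :=
    (intervalIntegrable_iff_integrableOn_Ioc_of_le two_pi_pos.le).2 (hf.2.integrable hp1)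
  have hdelay : IntervalIntegrable (fun t => ∑ j, B (x (t - r j))) volume 0 (2 * π) := by
    have hBx : IntervalIntegrable (B ∘ x) volume 0 (2 * π) :=
      ⟨B.integrable_comp hx.1, B.integrable_comp hx.2⟩
    simpa only [Finset.sum_fn, Function.comp_apply] using IntervalIntegrable.sum Finset.univ
      fun j _ => (hxper.comp B).intervalIntegrable_comp_sub_right two_pi_pos.ne' hBx (r j) 0 (2 * π)
  have hsol : IsPeriodicMildSolution (LinearPMap.mk D A)
      (fun s => (∑ j, B (x (s - r j))) + f s) x := by
    refine ⟨by simpa using hxper 0, fun t ht => (LinearPMap.mem_graph_iff _).2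
      ⟨⟨_, hxmem t ht⟩, rfl, ?_⟩⟩
    change A ⟨_, hxmem t ht⟩ = _
    rw [hxeq t ht, add_assoc, add_sub_cancel_left, add_sub_cancel_right]
  obtain ⟨⟨v, hv⟩, hv_eq, hAv⟩ := (LinearPMap.mem_graph_iff _).1
    (hsol.fourierCoef_mem_graph hA.isClosed hx (hdelay.add hf') k)
  dsimp only at hv_eq hAv
  subst hv_eq
  refine ⟨hv, ?_⟩
  rw [LinearPMap.mk_apply, fourierCoef_add hdelay hf', hxper.fourierCoef_sum_delay hx] at hAv
  rw [hAv, sub_sub_cancel, add_sub_cancel_left]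

/-- If `x` is `2π`-periodic, continuous on `[0, 2π]`, with
`∫₀ᵗ x(s) ds ∈ D(A)` and `x(t) = x(0) + A∫₀ᵗ x(s) ds + ∫₀ᵗ (Σ_j Bx(s - r_j) + f(s)) ds`
for all `t ∈ [0, 2π]`, then for every `k ∈ ℤ` one has `x̂(k) ∈ D(A)` and
`(ikI - A - Σ_j e^{-ikr_j} B) x̂(k) = f̂(k)`. -/
theorem mild_solution_fourierCoef {X : Type*}
    [NormedAddCommGroup X] [NormedSpace ℂ X] [CompleteSpace X]
    (p : ℝ≥0∞) (hp1 : 1 ≤ p) (hp2 : p < ⊤)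
    (D : Submodule ℂ X) (A : D →ₗ[ℂ] X) (hA : IsClosedOp D A)
    (B : X →L[ℂ] X) (n : ℕ) (r : Fin n → ℝ)
    (f : ℝ → X) (hf : PeriodicLp p f)
    (x : ℝ → X) (hxper : Function.Periodic x (2 * Real.pi))
    (hxcont : ContinuousOn x (Set.Icc 0 (2 * Real.pi)))
    (hxmem : ∀ t ∈ Set.Icc (0:ℝ) (2 * Real.pi), (∫ s in (0:ℝ)..t, x s) ∈ D)
    (hxeq : ∀ t : ℝ, ∀ ht : t ∈ Set.Icc (0:ℝ) (2 * Real.pi),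
      x t = x 0 + A ⟨∫ s in (0:ℝ)..t, x s, hxmem t ht⟩
        + ∫ s in (0:ℝ)..t, ((∑ j, B (x (s - r j))) + f s))
    (k : ℤ) :
    ∃ h : fourierCoef x k ∈ D,
      (Complex.I * (k : ℂ)) • fourierCoef x k - A ⟨fourierCoef x k, h⟩
        - ∑ j, Complex.exp (-Complex.I * (k : ℂ) * (r j : ℂ)) • B (fourierCoef x k)
      = fourierCoef f k :=
  mild_solution_fourierCoef_general p hp1 D A hA B n r f hf x hxper hxcont hxmem hxeq k
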